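/- In the empirical node setting, if a node is pure, i.e., all n_w samples in the node have the same class c₀ with 0 < n_w ≤ N^{c₀} < N, then I(Y; S_w) ≥ (n_w/N) · log(N/N^{c₀}) > 0. -/

import Mathlib

open Finset

/-!
Write `I(Y; S_w) = ∑_s ∑_c p(c,s) log (p(c,s) / (p(c) p(s)))`. By Gibbs' inequality
`x log (x/y) ≥ x - y`, the inner sum over `c` is nonnegative for every `s`, so `I(Y; S_w)` is at
least the inner sum at `s = true`. For a pure node only the class `c₀` contributes there, and
since `p(c₀, true) = p(true)` that term is
`p(c₀, true) · log (1 / p(c₀)) = (n_w/N) log (N/N^{c₀})`.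
-/

/-- Mutual information of a joint (finite) distribution. -/
noncomputable def mutualInfo {C B : Type*} [Fintype C] [Fintype B] (p : C → B → ℝ) : ℝ :=
  ∑ c, ∑ s, p c s * Real.log (p c s / ((∑ s', p c s') * (∑ c', p c' s)))

namespace Real

lemma sub_le_mul_log_div {x y : ℝ} (hx : 0 ≤ x) (hy : 0 ≤ y) (hxy : y = 0 → x = 0) :
    x - y ≤ x * log (x / y) := by
  rcases hx.eq_or_lt with rfl | hx
  · simpa using hy
  have hy : 0 < y := hy.lt_of_ne fun h => hx.ne' (hxy h.symm)
  have hlog : 1 - y / x ≤ log (x / y) := by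
    simpa only [inv_div] using one_sub_inv_le_log_of_pos (div_pos hx hy)
  calc x - y = x * (1 - y / x) := by field_simp
    _ ≤ x * log (x / y) := mul_le_mul_of_nonneg_left hlog hx.le

end Real

section MutualInfo

variable {C B : Type*} [Fintype C] [Fintype B] {p : C → B → ℝ}

lemma sum_mul_log_div_marginals_nonneg (hp : ∀ c s, 0 ≤ p c s)
    (hsum : ∑ c, ∑ s, p c s = 1) (s : B) :
    0 ≤ ∑ c, p c s * Real.log (p c s / ((∑ s', p c s') * ∑ c', p c' s)) := by
  have hrow : ∀ c, p c s ≤ ∑ s', p c s' := fun c =>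
    single_le_sum (fun s' _ => hp c s') (mem_univ s)
  have hcol : ∀ c, p c s ≤ ∑ c', p c' s := fun c =>
    single_le_sum (fun c' _ => hp c' s) (mem_univ c)
  have hterm : ∀ c, p c s - (∑ s', p c s') * ∑ c', p c' s ≤
      p c s * Real.log (p c s / ((∑ s', p c s') * ∑ c', p c' s)) := fun c =>
    Real.sub_le_mul_log_div (hp c s)
      (mul_nonneg ((hp c s).trans (hrow c)) ((hp c s).trans (hcol c)))
      fun h => by
        rcases mul_eq_zero.mp h with h | h
        · exact le_antisymm (h ▸ hrow c) (hp c s)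
        · exact le_antisymm (h ▸ hcol c) (hp c s)
  calc (0 : ℝ) = ∑ c, (p c s - (∑ s', p c s') * ∑ c', p c' s) := by
        rw [sum_sub_distrib, ← sum_mul, hsum, one_mul, sub_self]
    _ ≤ _ := sum_le_sum fun c _ => hterm c

lemma mul_log_inv_le_mutualInfo_of_pure (hp : ∀ c s, 0 ≤ p c s)
    (hsum : ∑ c, ∑ s, p c s = 1) {c₀ : C} {s₀ : B}
    (hpure : ∀ c, c ≠ c₀ → p c s₀ = 0) :
    p c₀ s₀ * Real.log (∑ s', p c₀ s')⁻¹ ≤ mutualInfo p := by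
  have hcol : ∑ c', p c' s₀ = p c₀ s₀ :=
    sum_eq_single c₀ (fun c _ hc => hpure c hc) (by simp)
  have hterm : ∑ c, p c s₀ * Real.log (p c s₀ / ((∑ s', p c s') * ∑ c', p c' s₀)) =
      p c₀ s₀ * Real.log (∑ s', p c₀ s')⁻¹ := by
    rw [sum_eq_single c₀ (fun c _ hc => by simp [hpure c hc]) (by simp), hcol]
    rcases eq_or_ne (p c₀ s₀) 0 with h | h
    · simp [h]
    · rw [div_mul_cancel_right₀ h]
  rw [← hterm, mutualInfo, sum_comm]
  exact single_le_sum (fun s _ => sum_mul_log_div_marginals_nonneg hp hsum s) (mem_univ s₀)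

end MutualInfo

theorem stmt6_general {C : Type*} [Fintype C]
    (N : ℕ) (Ncnt : C → ℕ) (ncnt : C → ℕ) (nw : ℕ) (c₀ : C)
    (hN : ∑ c, Ncnt c = N)
    (hle : ∀ c, ncnt c ≤ Ncnt c)
    (hpure₀ : ncnt c₀ = nw) (hpure : ∀ c, c ≠ c₀ → ncnt c = 0)
    (hpos : 0 < nw) (hlt₀ : Ncnt c₀ < N) :
    ((nw : ℝ) / N) * Real.log ((N : ℝ) / (Ncnt c₀ : ℝ)) ≤
        mutualInfo (fun (c : C) (s : Bool) =>
          if s then (ncnt c : ℝ) / N else ((Ncnt c - ncnt c : ℕ) : ℝ) / N) ∧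
      0 < ((nw : ℝ) / N) * Real.log ((N : ℝ) / (Ncnt c₀ : ℝ)) := by
  set p : C → Bool → ℝ := fun c s =>
    if s then (ncnt c : ℝ) / N else ((Ncnt c - ncnt c : ℕ) : ℝ) / N
  have hNpos : (0 : ℝ) < N := by exact_mod_cast (Nat.zero_le _).trans_lt hlt₀
  have hrow : ∀ c, ∑ s, p c s = Ncnt c / N := fun c => by
    simp only [p, Fintype.sum_bool, if_true, Bool.false_eq_true, if_false, Nat.cast_sub (hle c)]
    ring
  have hsum : ∑ c, ∑ s, p c s = 1 := by
    simp only [hrow, ← sum_div, ← Nat.cast_sum, hN, div_self hNpos.ne']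
  have hbound := mul_log_inv_le_mutualInfo_of_pure (p := p) (c₀ := c₀) (s₀ := true)
    (fun c s => by cases s <;> positivity) hsum (fun c hc => by simp [p, hpure c hc])
  rw [hrow, inv_div] at hbound
  have hc₀ : (0 : ℝ) < Ncnt c₀ := by exact_mod_cast hpos.trans_le (hpure₀ ▸ hle c₀)
  refine ⟨by simpa [p, hpure₀] using hbound, mul_pos (by positivity) (Real.log_pos ?_)⟩
  exact (one_lt_div hc₀).mpr (by exact_mod_cast hlt₀)

/-- If a node is pure — all `n_w` samples in it have the same class `c₀`, with
`0 < n_w ≤ N^{c₀} < N` — then `I(Y; S_w) ≥ (n_w/N) · log(N/N^{c₀}) > 0`. -/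
theorem stmt6 {C : Type*} [Fintype C]
    (N : ℕ) (Ncnt : C → ℕ) (ncnt : C → ℕ) (nw : ℕ) (c₀ : C)
    (hN : ∑ c, Ncnt c = N)
    (hnw : ∑ c, ncnt c = nw)
    (hle : ∀ c, ncnt c ≤ Ncnt c)
    (hpure₀ : ncnt c₀ = nw) (hpure : ∀ c, c ≠ c₀ → ncnt c = 0)
    (hpos : 0 < nw) (hle₀ : nw ≤ Ncnt c₀) (hlt₀ : Ncnt c₀ < N) :
    ((nw : ℝ) / N) * Real.log ((N : ℝ) / (Ncnt c₀ : ℝ)) ≤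
        mutualInfo (fun (c : C) (s : Bool) =>
          if s then (ncnt c : ℝ) / N else ((Ncnt c - ncnt c : ℕ) : ℝ) / N) ∧
      0 < ((nw : ℝ) / N) * Real.log ((N : ℝ) / (Ncnt c₀ : ℝ)) :=
  stmt6_general N Ncnt ncnt nw c₀ hN hle hpure₀ hpure hpos hlt₀
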